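/- arXiv:cs/0701058 — 3 statements merged into one kernel-verified Lean document; each statement's English description precedes it below -/
import Mathlib

section
/- Let s₁,...,s_N be i.i.d. random vectors uniformly distributed over a compact set R ⊂ R^M with positive Lebesgue measure λ(R), and let γ_{r,N} = min_{1≤i≤N} ‖sᵢ‖^r with 0 assumed to lie in R. Then lim_{N→∞} E[N^(r/M) γ_{r,N}] = B_M^(-r/M) Γ(1 + r/M) λ(R)^(r/M), where B_M = π^(M/2)/Γ(1+M/2) is the volume of the unit ball in R^M. -/
open MeasureTheory ProbabilityTheory Filter Real

open scoped ENNReal Topology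
open Set

/-! For `t > 0` the event `N ^ (r / M) * minᵢ ‖sᵢ‖ ^ r > t` says that none of the `N` points lies
in the ball `‖x‖ ^ M ≤ t ^ (M / r) / N`, so by independence and the layer-cake formula the
expectation equals `∫₀^∞ F (t ^ (M / r) / N) ^ N dt`, where `F u = P (‖s‖ ^ M > u)`. Since `R`
contains a ball around `0` and is bounded, `F u = 1 - κ u` near `0` with `κ = B_M / λ(R)` and
`F` vanishes for large `u`. Hence `F (x / N) ^ N → e^{-κ x}` under the uniform bound `e^{-c x}`,
and dominated convergence gives the limit `∫₀^∞ e^{-κ t ^ (M / r)} dt = κ ^ (-r / M) Γ(1 + r / M)`.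
-/

theorem div_rpow_lt_rpow_iff_rpow_div_lt_pow {M : ℕ} (hM : 0 < M) {r : ℝ} (hr : 0 < r)
    {n t y : ℝ} (hn : 0 < n) (ht : 0 ≤ t) (hy : 0 ≤ y) :
    t / n ^ (r / M) < y ^ r ↔ t ^ (M / r : ℝ) / n < y ^ M := by
  have hexp_n : r / M * (M / r) = 1 := by field_simp
  have hexp_y : r * (M / r) = M := by field_simp
  rw [← rpow_lt_rpow_iff (by positivity) (by positivity) (by positivity : 0 < (M / r : ℝ)),
    div_rpow ht (by positivity), ← rpow_mul hn.le, ← rpow_mul hy, hexp_n, hexp_y, rpow_one,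
    rpow_natCast]

theorem ProbabilityTheory.iIndepFun.measure_iInter_preimage_eq_pow {Ω E ι : Type*}
    [MeasurableSpace Ω] [MeasurableSpace E] [Fintype ι] {P : Measure Ω} {μ : Measure E}
    {s : ι → Ω → E}
    (hmeas : ∀ i, Measurable (s i)) (hindep : iIndepFun s P) (hlaw : ∀ i, P.map (s i) = μ)
    {A : Set E} (hA : MeasurableSet A) :
    P (⋂ i, s i ⁻¹' A) = μ A ^ Fintype.card ι := by
  rw [hindep.meas_iInter fun i => ⟨A, hA, rfl⟩, ← Finset.card_univ, ← Finset.prod_const]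
  exact Finset.prod_congr rfl fun i _ => by rw [← hlaw i, Measure.map_apply (hmeas i) hA]

theorem lt_mul_iInf_iff {ι : Type*} [Fintype ι] [Nonempty ι] {c : ℝ} (hc : 0 < c) (t : ℝ)
    (f : ι → ℝ) : t < c * ⨅ i, f i ↔ ∀ i, t / c < f i := by
  rw [← div_lt_iff₀' hc, ← Finset.inf'_univ_eq_ciInf, Finset.lt_inf'_iff]
  simp

theorem integral_mul_iInf_eq_lintegral_pow {Ω E : Type*} [MeasurableSpace Ω]
    [MeasurableSpace E] {P : Measure Ω} {μ : Measure E} {s : ℕ → Ω → E}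
    (hmeas : ∀ i, Measurable (s i)) (hindep : iIndepFun s P) (hlaw : ∀ i, P.map (s i) = μ)
    {f : E → ℝ} (hf : Measurable f) (hf0 : 0 ≤ f) {c : ℝ} (hc : 0 < c) {N : ℕ} (hN : 0 < N) :
    ∫ ω, c * ⨅ i : Fin N, f (s i ω) ∂P =
      (∫⁻ t in Ioi 0, μ {x | t / c < f x} ^ N).toReal := by
  have hX0 : 0 ≤ fun ω => c * ⨅ i : Fin N, f (s i ω) := fun ω =>
    mul_nonneg hc.le (Real.iInf_nonneg fun i => hf0 _)
  have hXmeas : Measurable fun ω => c * ⨅ i : Fin N, f (s i ω) :=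
    measurable_const.mul (Measurable.iInf fun i => hf.comp (hmeas i))
  rw [integral_eq_lintegral_of_nonneg_ae (ae_of_all _ hX0) hXmeas.aestronglyMeasurable,
    lintegral_eq_lintegral_meas_lt P (ae_of_all _ hX0) hXmeas.aemeasurable]
  congr 1
  refine lintegral_congr fun t => ?_
  have : Nonempty (Fin N) := Fin.pos_iff_nonempty.mp hN
  have hevent :
      {ω | t < c * ⨅ i : Fin N, f (s i ω)} = ⋂ i : Fin N, s i ⁻¹' {x | t / c < f x} := by
    ext ω
    simp [lt_mul_iInf_iff hc]
  rw [hevent, iIndepFun.measure_iInter_preimage_eq_pow (s := fun i : Fin N => s i)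
    (fun i => hmeas i) (hindep.precomp Fin.val_injective) (fun i => hlaw i)
    (measurableSet_lt measurable_const hf), Fintype.card_fin]

theorem integral_mul_iInf_norm_rpow_eq_lintegral_pow {Ω E : Type*} [MeasurableSpace Ω]
    [NormedAddCommGroup E] [MeasurableSpace E] [OpensMeasurableSpace E] {P : Measure Ω}
    {μ : Measure E} {s : ℕ → Ω → E} (hmeas : ∀ i, Measurable (s i)) (hindep : iIndepFun s P)
    (hlaw : ∀ i, P.map (s i) = μ) {M : ℕ} (hM : 0 < M) {r : ℝ} (hr : 0 < r) {N : ℕ}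
    (hN : 0 < N) :
    ∫ ω, (N : ℝ) ^ (r / M) * ⨅ i : Fin N, ‖s i ω‖ ^ r ∂P =
      (∫⁻ t in Ioi 0, μ {x | t ^ (M / r : ℝ) / N < ‖x‖ ^ M} ^ N).toReal := by
  rw [integral_mul_iInf_eq_lintegral_pow hmeas hindep hlaw (measurable_norm.pow_const r)
    (fun x => rpow_nonneg (norm_nonneg x) r) (by positivity) hN]
  congr 1
  refine setLIntegral_congr_fun measurableSet_Ioi fun t ht => ?_
  congr 2
  ext x
  exact div_rpow_lt_rpow_iff_rpow_div_lt_pow hM hr (Nat.cast_pos.mpr hN) (le_of_lt ht)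
    (norm_nonneg x)

theorem integrableOn_exp_neg_mul_rpow {b p : ℝ} (hb : 0 < b) (hp : 0 < p) :
    IntegrableOn (fun t : ℝ => exp (-(b * t ^ p))) (Ioi 0) := by
  simpa using integrableOn_rpow_mul_exp_neg_mul_rpow (s := 0) (by norm_num) hp hb

theorem lintegral_exp_neg_mul_rpow {b p : ℝ} (hb : 0 < b) (hp : 0 < p) :
    ∫⁻ t in Ioi 0, ENNReal.ofReal (exp (-(b * t ^ p))) =
      ENNReal.ofReal (b ^ (-1 / p) * Gamma (1 / p + 1)) := by
  simp_rw [← integral_exp_neg_mul_rpow hp hb, neg_mul]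
  exact (ofReal_integral_eq_lintegral_ofReal (integrableOn_exp_neg_mul_rpow hb hp)
    (ae_of_all _ fun t => (exp_pos _).le)).symm

section OneSubMulNearZero

variable {F : ℝ → ℝ≥0∞} {κ δ Δ : ℝ}

theorem tendsto_pow_div_of_eq_one_sub_mul (hδ : 0 < δ)
    (hF : ∀ u, 0 ≤ u → u ≤ δ → F u = ENNReal.ofReal (1 - κ * u)) {x : ℝ} (hx : 0 ≤ x) :
    Tendsto (fun N : ℕ => F (x / N) ^ N) atTop (𝓝 (ENNReal.ofReal (exp (-(κ * x))))) := by
  have hsmall : ∀ᶠ N : ℕ in atTop, x / N ≤ δ :=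
    (tendsto_const_div_atTop_nhds_zero_nat x).eventually (Iic_mem_nhds hδ)
  have hpos : ∀ᶠ N : ℕ in atTop, κ * x / N ≤ 1 :=
    (tendsto_const_div_atTop_nhds_zero_nat (κ * x)).eventually (Iic_mem_nhds one_pos)
  refine (ENNReal.tendsto_ofReal (tendsto_one_add_div_pow_exp (-(κ * x)))).congr' ?_
  filter_upwards [hsmall, hpos] with N hN hN'
  rw [hF _ (by positivity) hN, ← ENNReal.ofReal_pow (by rw [mul_div_assoc] at hN'; linarith)]
  congr 2
  ring

theorem le_ofReal_exp_neg_mul_of_eq_one_sub_mul (hF_anti : Antitone F) (hκ : 0 ≤ κ)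
    (hδ : 0 ≤ δ) (hΔ : 0 < Δ) (hF : ∀ u, 0 ≤ u → u ≤ δ → F u = ENNReal.ofReal (1 - κ * u))
    (hF_zero : ∀ u, Δ ≤ u → F u = 0) {u : ℝ} (hu : 0 ≤ u) :
    F u ≤ ENNReal.ofReal (exp (-(min κ (κ * δ / Δ) * u))) := by
  -- Beyond `δ` we only know `F u ≤ F δ ≤ e^{-κδ}`; the slope `κδ/Δ` keeps `e^{-cu}` above
  -- that level up to `u = Δ`, where `F` vanishes.
  have one_sub_le (a : ℝ) : ENNReal.ofReal (1 - a) ≤ ENNReal.ofReal (exp (-a)) :=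
    ENNReal.ofReal_le_ofReal (by linarith [add_one_le_exp (-a)])
  rcases le_or_gt u δ with huδ | hδu
  · refine (hF u hu huδ).trans_le ((one_sub_le _).trans (ENNReal.ofReal_le_ofReal ?_))
    exact exp_le_exp.mpr (neg_le_neg (mul_le_mul_of_nonneg_right (min_le_left _ _) hu))
  rcases le_or_gt Δ u with hΔu | huΔ
  · simp [hF_zero u hΔu]
  calc F u ≤ F δ := hF_anti hδu.le
    _ = ENNReal.ofReal (1 - κ * δ) := hF δ hδ le_rfl
    _ ≤ ENNReal.ofReal (exp (-(κ * δ))) := one_sub_le _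
    _ ≤ ENNReal.ofReal (exp (-(min κ (κ * δ / Δ) * u))) := by
      refine ENNReal.ofReal_le_ofReal (exp_le_exp.mpr (neg_le_neg ?_))
      calc min κ (κ * δ / Δ) * u ≤ κ * δ / Δ * u :=
            mul_le_mul_of_nonneg_right (min_le_right _ _) hu
        _ ≤ κ * δ / Δ * Δ := mul_le_mul_of_nonneg_left huΔ.le (by positivity)
        _ = κ * δ := div_mul_cancel₀ _ hΔ.ne'

theorem pow_div_le_ofReal_exp_neg_mul (hF_anti : Antitone F) (hκ : 0 ≤ κ)
    (hδ : 0 ≤ δ) (hΔ : 0 < Δ) (hF : ∀ u, 0 ≤ u → u ≤ δ → F u = ENNReal.ofReal (1 - κ * u))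
    (hF_zero : ∀ u, Δ ≤ u → F u = 0) {x : ℝ} (hx : 0 ≤ x) {N : ℕ} (hN : 0 < N) :
    F (x / N) ^ N ≤ ENNReal.ofReal (exp (-(min κ (κ * δ / Δ) * x))) := by
  calc F (x / N) ^ N ≤ ENNReal.ofReal (exp (-(min κ (κ * δ / Δ) * (x / N)))) ^ N :=
        pow_le_pow_left' (le_ofReal_exp_neg_mul_of_eq_one_sub_mul hF_anti hκ hδ hΔ hF hF_zero
          (by positivity)) N
    _ = ENNReal.ofReal (exp (-(min κ (κ * δ / Δ) * x))) := by
      rw [← ENNReal.ofReal_pow (exp_pos _).le, ← exp_nat_mul]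
      congr 3
      field_simp

theorem tendsto_toReal_lintegral_pow_rpow_div (hF_anti : Antitone F) (hκ : 0 < κ)
    (hδ : 0 < δ) (hΔ : 0 < Δ) (hF : ∀ u, 0 ≤ u → u ≤ δ → F u = ENNReal.ofReal (1 - κ * u))
    (hF_zero : ∀ u, Δ ≤ u → F u = 0) {p : ℝ} (hp : 0 < p) :
    Tendsto (fun N : ℕ => (∫⁻ t in Ioi 0, F (t ^ p / N) ^ N).toReal) atTop
      (𝓝 (κ ^ (-1 / p) * Gamma (1 / p + 1))) := by
  have hc : 0 < min κ (κ * δ / Δ) := lt_min hκ (by positivity)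
  have hlim : Tendsto (fun N : ℕ => ∫⁻ t in Ioi 0, F (t ^ p / N) ^ N) atTop
      (𝓝 (∫⁻ t in Ioi 0, ENNReal.ofReal (exp (-(κ * t ^ p))))) := by
    refine tendsto_lintegral_filter_of_dominated_convergence
      (fun t => ENNReal.ofReal (exp (-(min κ (κ * δ / Δ) * t ^ p))))
      (Eventually.of_forall fun N => ?_) ?_
      (integrableOn_exp_neg_mul_rpow hc hp).lintegral_lt_top.ne ?_
    · exact (hF_anti.measurable.comp ((measurable_id.pow_const p).div_const _)).pow_const N
    · filter_upwards [eventually_gt_atTop 0] with N hN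
      filter_upwards [ae_restrict_mem measurableSet_Ioi] with t ht
      exact pow_div_le_ofReal_exp_neg_mul hF_anti hκ.le hδ.le hΔ hF hF_zero
        (rpow_nonneg (le_of_lt ht) p) hN
    · filter_upwards [ae_restrict_mem measurableSet_Ioi] with t ht
      exact tendsto_pow_div_of_eq_one_sub_mul hδ hF (rpow_nonneg (le_of_lt ht) p)
  rw [lintegral_exp_neg_mul_rpow hκ hp] at hlim
  have := (ENNReal.tendsto_toReal ENNReal.ofReal_ne_top).comp hlim
  rwa [ENNReal.toReal_ofReal (by positivity)] at this

end OneSubMulNearZero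

theorem cond_setOf_lt_eq_zero {α : Type*} [MeasurableSpace α] {μ : Measure α} {R : Set α}
    {g : α → ℝ} (hg : Measurable g) {u : ℝ} (hR : ∀ x ∈ R, g x ≤ u) :
    μ[|R] {x | u < g x} = 0 := by
  have hdisj : R ∩ {x | u < g x} = ∅ :=
    eq_empty_of_forall_notMem fun x ⟨hxR, hx⟩ => (hR x hxR).not_gt hx
  rw [cond_apply' (measurableSet_lt measurable_const hg), hdisj, measure_empty, mul_zero]

theorem volume_setOf_norm_pow_le {M : ℕ} (hM : M ≠ 0) {u : ℝ} (hu : 0 ≤ u) :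
    volume {x : EuclideanSpace ℝ (Fin M) | ‖x‖ ^ M ≤ u} =
      ENNReal.ofReal (π ^ ((M : ℝ) / 2) / Gamma (1 + M / 2) * u) := by
  have : Nonempty (Fin M) := Fin.pos_iff_nonempty.mp (Nat.pos_of_ne_zero hM)
  have hball : {x : EuclideanSpace ℝ (Fin M) | ‖x‖ ^ M ≤ u} =
      Metric.closedBall 0 (u ^ (M⁻¹ : ℝ)) := by
    ext x
    rw [mem_ofPred_eq, mem_closedBall_zero_iff, ← pow_le_pow_iff_left₀ (norm_nonneg x)
      (by positivity) hM, rpow_inv_natCast_pow hu hM]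
  have hsqrt : √π ^ M = π ^ ((M : ℝ) / 2) := by
    rw [sqrt_eq_rpow, ← rpow_natCast, ← rpow_mul pi_pos.le, one_div_mul_eq_div]
  rw [hball, EuclideanSpace.volume_closedBall, Fintype.card_fin, ← ENNReal.ofReal_pow
    (by positivity), rpow_inv_natCast_pow hu hM, ← ENNReal.ofReal_mul hu, hsqrt, add_comm,
    mul_comm]

theorem cond_setOf_lt_norm_pow {M : ℕ} (hM : M ≠ 0) {R : Set (EuclideanSpace ℝ (Fin M))}
    (hR0 : volume R ≠ 0) (hRfin : volume R ≠ ⊤) {u : ℝ} (hu : 0 ≤ u)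
    (hsub : {x | ‖x‖ ^ M ≤ u} ⊆ R) :
    volume[|R] {x | u < ‖x‖ ^ M} =
      ENNReal.ofReal (1 - π ^ ((M : ℝ) / 2) / Gamma (1 + M / 2) / (volume R).toReal * u) := by
  have := cond_isProbabilityMeasure_of_finite hR0 hRfin
  have hmeas : MeasurableSet {x : EuclideanSpace ℝ (Fin M) | ‖x‖ ^ M ≤ u} :=
    measurableSet_le (measurable_norm.pow_const M) measurable_const
  have hcompl : {x : EuclideanSpace ℝ (Fin M) | u < ‖x‖ ^ M} = {x | ‖x‖ ^ M ≤ u}ᶜ := by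
    ext x; simp
  have hL : 0 < (volume R).toReal := ENNReal.toReal_pos hR0 hRfin
  have hinv : (volume R)⁻¹ = ENNReal.ofReal (volume R).toReal⁻¹ := by
    rw [ENNReal.ofReal_inv_of_pos hL, ENNReal.ofReal_toReal hRfin]
  rw [hcompl, prob_compl_eq_one_sub hmeas, cond_apply' hmeas, inter_eq_right.mpr hsub,
    volume_setOf_norm_pow_le hM hu, hinv, ← ENNReal.ofReal_mul (by positivity),
    ← ENNReal.ofReal_one, ← ENNReal.ofReal_sub _ (by positivity)]
  congr 2
  field_simp

theorem slm_asymptotics_uniform_general (M : ℕ) (hM : 0 < M) (r : ℝ) (hr : 0 < r)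
    {Ω : Type*} [MeasurableSpace Ω] (P : Measure Ω)
    (R : Set (EuclideanSpace ℝ (Fin M))) (hRcomp : IsCompact R)
    (hR0 : 0 ∈ interior R) (hRpos : volume R ≠ 0)
    (s : ℕ → Ω → EuclideanSpace ℝ (Fin M))
    (hmeas : ∀ i, Measurable (s i))
    (hindep : iIndepFun s P)
    (hunif : ∀ i, Measure.map (s i) P = (volume R)⁻¹ • volume.restrict R) :
    Tendsto
      (fun N : ℕ => ∫ ω, (N : ℝ) ^ (r / M) * (⨅ i : Fin N, ‖s i ω‖ ^ r) ∂P)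
      atTop
      (nhds ((π ^ ((M : ℝ) / 2) / Real.Gamma (1 + M / 2)) ^ (-(r / M)) *
        Real.Gamma (1 + r / M) * (volume R).toReal ^ (r / M))) := by
  have hRfin : volume R ≠ ⊤ := hRcomp.measure_lt_top.ne
  set B := π ^ ((M : ℝ) / 2) / Gamma (1 + M / 2)
  set L := (volume R).toReal
  have hB : 0 < B := div_pos (rpow_pos_of_pos pi_pos _) (Gamma_pos_of_pos (by positivity))
  have hL : 0 < L := ENNReal.toReal_pos hRpos hRfin
  obtain ⟨ε, hε, hεR⟩ :=
    Metric.nhds_basis_closedBall.mem_iff.mp (mem_interior_iff_mem_nhds.mp hR0)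
  obtain ⟨D, hD, hRD⟩ := hRcomp.isBounded.exists_pos_norm_le
  set F : ℝ → ℝ≥0∞ := fun u => volume[|R] {x | u < ‖x‖ ^ M}
  have hF_anti : Antitone F := fun u v huv => measure_mono fun x hx => huv.trans_lt hx
  have hF_small (u : ℝ) (hu : 0 ≤ u) (huε : u ≤ ε ^ M) :
      F u = ENNReal.ofReal (1 - B / L * u) :=
    cond_setOf_lt_norm_pow hM.ne' hRpos hRfin hu fun x hx =>
      hεR <| mem_closedBall_zero_iff.mpr <|
        (pow_le_pow_iff_left₀ (norm_nonneg x) hε.le hM.ne').mp (hx.trans huε)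
  have hF_zero (u : ℝ) (hu : D ^ M ≤ u) : F u = 0 :=
    cond_setOf_lt_eq_zero (measurable_norm.pow_const M) fun x hx =>
      (pow_le_pow_left₀ (norm_nonneg x) (hRD x hx) M).trans hu
  have hval : (B / L) ^ (-1 / (M / r : ℝ)) * Gamma (1 / (M / r : ℝ) + 1) =
      B ^ (-(r / M)) * Gamma (1 + r / M) * L ^ (r / M) := by
    rw [div_rpow hB.le hL.le, one_div_div, neg_div, one_div_div, rpow_neg hL.le, add_comm,
      div_inv_eq_mul]
    ring
  refine hval ▸ (tendsto_toReal_lintegral_pow_rpow_div hF_anti (div_pos hB hL) (by positivity)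
    (by positivity) hF_small hF_zero (div_pos (Nat.cast_pos.mpr hM) hr)).congr' ?_
  filter_upwards [eventually_gt_atTop 0] with N hN
  exact (integral_mul_iInf_norm_rpow_eq_lintegral_pow hmeas hindep hunif hM hr hN).symm

/-- Asymptotics of the minimum `r`-th power norm of `N` i.i.d. uniform points on a
compact region `R ⊆ ℝ^M` containing a neighborhood of `0`:
`lim_N E[N^(r/M) min_i ‖sᵢ‖^r] = B_M^(-r/M) Γ(1+r/M) λ(R)^(r/M)`. -/
theorem slm_asymptotics_uniform (M : ℕ) (hM : 0 < M) (r : ℝ) (hr : 0 < r)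
    {Ω : Type*} [MeasurableSpace Ω] (P : Measure Ω) [IsProbabilityMeasure P]
    (R : Set (EuclideanSpace ℝ (Fin M))) (hRcomp : IsCompact R)
    (hR0 : 0 ∈ interior R) (hRpos : volume R ≠ 0)
    (s : ℕ → Ω → EuclideanSpace ℝ (Fin M))
    (hmeas : ∀ i, Measurable (s i))
    (hindep : iIndepFun s P)
    (hunif : ∀ i, Measure.map (s i) P = (volume R)⁻¹ • volume.restrict R) :
    Tendsto
      (fun N : ℕ => ∫ ω, (N : ℝ) ^ (r / M) * (⨅ i : Fin N, ‖s i ω‖ ^ r) ∂P)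
      atTop
      (nhds ((π ^ ((M : ℝ) / 2) / Real.Gamma (1 + M / 2)) ^ (-(r / M)) *
        Real.Gamma (1 + r / M) * (volume R).toReal ^ (r / M))) :=
  slm_asymptotics_uniform_general M hM r hr P R hRcomp hR0 hRpos s hmeas hindep hunif
end

section
/- For i.i.d. points s₁,...,s_N uniform over a compact set R ⊂ R^M containing a neighborhood of 0, the random variable N^(2/M) min_i ‖sᵢ‖² converges in distribution to a Weibull-type law with P(limit > t) = exp(−B_M t^(M/2)/λ(R)). -/
open MeasureTheory ProbabilityTheory Filter Real Metric

/-!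
The event `t < N^(2/M) · minᵢ ‖sᵢ‖²` says that none of the first `N` points lies in the closed
ball of radius `r_N = √(t / N^(2/M))` about `0`. Since `r_N → 0` and `0 ∈ interior R`, this ball
lies in `R` for large `N`, so by independence the event has probability
`(1 - B_M r_N^M / λ(R))^N = (1 - B_M t^(M/2) / (λ(R) N))^N → exp(-B_M t^(M/2) / λ(R))`.
-/

theorem lt_ciInf_iff_of_finite {ι α : Type*} [Finite ι] [Nonempty ι]
    [ConditionallyCompleteLinearOrder α] {a : α} {f : ι → α} :
    a < ⨅ i, f i ↔ ∀ i, a < f i := by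
  refine ⟨fun h i => h.trans_le (ciInf_le (Set.finite_range f).bddBelow i), fun h => ?_⟩
  obtain ⟨i, hi⟩ := exists_eq_ciInf_of_finite (f := f)
  exact hi ▸ h i

theorem setOf_lt_mul_iInf_norm_sq {Ω E : Type*} [SeminormedAddCommGroup E]
    (s : ℕ → Ω → E) {N : ℕ} (hN : 0 < N) {a t : ℝ} (ha : 0 < a) (ht : 0 ≤ t) :
    {ω | t < a * ⨅ i : Fin N, ‖s i ω‖ ^ 2} =
      ⋂ i ∈ Finset.range N, s i ⁻¹' (closedBall 0 √(t / a))ᶜ := by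
  have : Nonempty (Fin N) := Fin.pos_iff_nonempty.mp hN
  ext ω
  simp only [Set.mem_ofPred_eq, Set.mem_iInter, Finset.mem_range, Set.mem_preimage,
    Set.mem_compl_iff, mem_closedBall_zero_iff, not_le,
    Real.sqrt_lt (div_nonneg ht ha.le) (norm_nonneg _), ← div_lt_iff₀' ha,
    lt_ciInf_iff_of_finite]
  exact ⟨fun h i hi => h ⟨i, hi⟩, fun h i => h i i.isLt⟩

theorem ProbabilityTheory.iIndepFun.measure_biInter_preimage_eq_pow
    {Ω ι E : Type*} [MeasurableSpace Ω] [MeasurableSpace E] {P : Measure Ω}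
    {s : ι → Ω → E} (hindep : iIndepFun s P) {B : Set E} (hB : MeasurableSet B)
    {q : ENNReal} (hq : ∀ i, P (s i ⁻¹' B) = q) (S : Finset ι) :
    P (⋂ i ∈ S, s i ⁻¹' B) = q ^ S.card := by
  rw [hindep.meas_biInter fun i _ => ⟨B, hB, rfl⟩, Finset.prod_congr rfl fun i _ => hq i,
    Finset.prod_const]

theorem ProbabilityTheory.cond_compl_toReal {α : Type*} [MeasurableSpace α] (μ : Measure α)
    {R K : Set α} (hK : MeasurableSet K) (hKR : K ⊆ R) (hR0 : μ R ≠ 0) (hR : μ R ≠ ⊤) :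
    (μ[Kᶜ|R]).toReal = 1 - (μ K).toReal / (μ R).toReal := by
  have := cond_isProbabilityMeasure_of_finite hR0 hR
  rw [prob_compl_eq_one_sub hK, ENNReal.toReal_sub_of_le prob_le_one ENNReal.one_ne_top,
    cond_apply' hK, Set.inter_eq_right.mpr hKR, ENNReal.toReal_mul,
    ENNReal.toReal_inv, ENNReal.toReal_one, inv_mul_eq_div]

theorem EuclideanSpace.volume_closedBall_sqrt_toReal {ι : Type*} [Fintype ι] [Nonempty ι]
    (x : EuclideanSpace ℝ ι) {u : ℝ} (hu : 0 ≤ u) :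
    (volume (closedBall x √u)).toReal =
      π ^ ((Fintype.card ι : ℝ) / 2) / Gamma (1 + Fintype.card ι / 2) *
        u ^ ((Fintype.card ι : ℝ) / 2) := by
  have hsqrt_pow : ∀ {y : ℝ}, 0 ≤ y → √y ^ Fintype.card ι = y ^ ((Fintype.card ι : ℝ) / 2) :=
    fun hy => by
      rw [Real.sqrt_eq_rpow, ← Real.rpow_natCast, ← Real.rpow_mul hy, one_div_mul_eq_div]
  rw [EuclideanSpace.volume_closedBall, ENNReal.toReal_mul, ENNReal.toReal_pow,
    ENNReal.toReal_ofReal (Real.sqrt_nonneg u), ENNReal.toReal_ofReal (by positivity),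
    hsqrt_pow hu, hsqrt_pow pi_pos.le, add_comm]
  ring

theorem div_rpow_inv_rpow {t N p : ℝ} (ht : 0 ≤ t) (hN : 0 ≤ N) (hp : p ≠ 0) :
    (t / N ^ p⁻¹) ^ p = t ^ p / N := by
  rw [Real.div_rpow ht (by positivity), ← Real.rpow_mul hN, inv_mul_cancel₀ hp, Real.rpow_one]

theorem tendsto_sqrt_div_rpow_atTop {p : ℝ} (hp : 0 < p) (t : ℝ) :
    Tendsto (fun N : ℕ => √(t / (N : ℝ) ^ p)) atTop (nhds 0) := by
  have h := (tendsto_rpow_atTop hp).comp tendsto_natCast_atTop_atTop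
  simpa [Function.comp_def] using
    (Real.continuous_sqrt.tendsto 0).comp (tendsto_const_nhds.div_atTop h)

theorem measure_lt_mul_iInf_norm_sq_toReal {M : ℕ} (hM : 0 < M)
    {Ω : Type*} [MeasurableSpace Ω] {P : Measure Ω}
    {R : Set (EuclideanSpace ℝ (Fin M))} (hR0 : volume R ≠ 0) (hR : volume R ≠ ⊤)
    {s : ℕ → Ω → EuclideanSpace ℝ (Fin M)} (hmeas : ∀ i, Measurable (s i))
    (hindep : iIndepFun s P) (hunif : ∀ i, P.map (s i) = volume[|R])
    {N : ℕ} (hN : 0 < N) {a t : ℝ} (ha : 0 < a) (ht : 0 ≤ t)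
    (hball : closedBall 0 √(t / a) ⊆ R) :
    (P {ω | t < a * ⨅ i : Fin N, ‖s i ω‖ ^ 2}).toReal =
      (1 - π ^ ((M : ℝ) / 2) / Gamma (1 + M / 2) * (t / a) ^ ((M : ℝ) / 2) /
        (volume R).toReal) ^ N := by
  have : Nonempty (Fin M) := Fin.pos_iff_nonempty.mp hM
  have hK : MeasurableSet (closedBall (0 : EuclideanSpace ℝ (Fin M)) √(t / a))ᶜ :=
    measurableSet_closedBall.compl
  have hlaw : ∀ i, P (s i ⁻¹' (closedBall 0 √(t / a))ᶜ) = volume[(closedBall 0 √(t / a))ᶜ|R] :=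
    fun i => by rw [← Measure.map_apply (hmeas i) hK, hunif i]
  rw [setOf_lt_mul_iInf_norm_sq s hN ha ht, hindep.measure_biInter_preimage_eq_pow hK hlaw,
    Finset.card_range, ENNReal.toReal_pow,
    cond_compl_toReal _ measurableSet_closedBall hball hR0 hR,
    EuclideanSpace.volume_closedBall_sqrt_toReal _ (div_nonneg ht ha.le), Fintype.card_fin]

theorem slm_weibull_limit_general (M : ℕ) (hM : 0 < M)
    {Ω : Type*} [MeasurableSpace Ω] (P : Measure Ω)
    (R : Set (EuclideanSpace ℝ (Fin M))) (hRcomp : IsCompact R)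
    (hR0 : 0 ∈ interior R) (hRpos : volume R ≠ 0)
    (s : ℕ → Ω → EuclideanSpace ℝ (Fin M))
    (hmeas : ∀ i, Measurable (s i))
    (hindep : iIndepFun s P)
    (hunif : ∀ i, Measure.map (s i) P = (volume R)⁻¹ • volume.restrict R) :
    ∀ t : ℝ, 0 < t →
      Tendsto
        (fun N : ℕ =>
          (P {ω | t < (N : ℝ) ^ ((2 : ℝ) / M) * (⨅ i : Fin N, ‖s i ω‖ ^ 2)}).toReal)
        atTop
        (nhds (Real.exp (-(π ^ ((M : ℝ) / 2) / Real.Gamma (1 + M / 2)) *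
          t ^ ((M : ℝ) / 2) / (volume R).toReal))) := by
  intro t ht
  have hM' : (0 : ℝ) < M := Nat.cast_pos.mpr hM
  have hsmall : ∀ᶠ N : ℕ in atTop, closedBall 0 √(t / (N : ℝ) ^ ((2 : ℝ) / M)) ⊆ R :=
    (tendsto_sqrt_div_rpow_atTop (by positivity) t).eventually
      (eventually_closedBall_subset (mem_interior_iff_mem_nhds.mp hR0))
  refine (tendsto_one_add_div_pow_exp _).congr' ?_
  filter_upwards [hsmall, eventually_gt_atTop 0] with N hball hN
  have hN' : (0 : ℝ) < N := Nat.cast_pos.mpr hN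
  rw [measure_lt_mul_iInf_norm_sq_toReal hM hRpos hRcomp.measure_lt_top.ne hmeas hindep hunif hN
    (by positivity) ht.le hball, ← inv_div (M : ℝ),
    div_rpow_inv_rpow ht.le hN'.le (by positivity)]
  ring

/-- Distributional limit: for i.i.d. uniform points on a compact `R ∋ 0`,
`P(N^(2/M) min_i ‖sᵢ‖² > t) → exp(−B_M t^(M/2)/λ(R))` for every `t > 0`,
i.e. the rescaled minimum energy has a Weibull-type limit law. -/
theorem slm_weibull_limit (M : ℕ) (hM : 0 < M)
    {Ω : Type*} [MeasurableSpace Ω] (P : Measure Ω) [IsProbabilityMeasure P]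
    (R : Set (EuclideanSpace ℝ (Fin M))) (hRcomp : IsCompact R)
    (hR0 : 0 ∈ interior R) (hRpos : volume R ≠ 0)
    (s : ℕ → Ω → EuclideanSpace ℝ (Fin M))
    (hmeas : ∀ i, Measurable (s i))
    (hindep : iIndepFun s P)
    (hunif : ∀ i, Measure.map (s i) P = (volume R)⁻¹ • volume.restrict R) :
    ∀ t : ℝ, 0 < t →
      Tendsto
        (fun N : ℕ =>
          (P {ω | t < (N : ℝ) ^ ((2 : ℝ) / M) * (⨅ i : Fin N, ‖s i ω‖ ^ 2)}).toReal)
        atTop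
        (nhds (Real.exp (-(π ^ ((M : ℝ) / 2) / Real.Gamma (1 + M / 2)) *
          t ^ ((M : ℝ) / 2) / (volume R).toReal))) :=
  slm_weibull_limit_general M hM P R hRcomp hR0 hRpos s hmeas hindep hunif
end

section
/- Let R_sphere = B_M(0, ρ) and R_oval be the ellipsoid {x : xᵀQx ≤ ρ'²} of the same volume, where Q has eigenvalues λ₁,...,λ_M with (det Q)^(1/M) = g. Then the ratio of the average value of xᵀQx under the uniform distribution on R_sphere to that on R_oval equals the channel gain G_H = (Σλᵢ/M)/(Πλᵢ)^(1/M). -/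
/-!
The linear map `x ↦ L x` with `L = diag(√λ) Uᵀ` carries the ellipsoid onto the ball of radius `ρ'`
and turns `xᵀQx` into `|Lx|²`, so the mean of `xᵀQx` over the ellipsoid is the mean of `|y|²`
over that ball, namely `M ρ'² / (M + 2)` (integrate in polar coordinates). Over the ball of radius
`ρ`, reflections and coordinate swaps give mean `δᵢⱼ ρ² / (M + 2)` for `xᵢ xⱼ`, so the mean of
`xᵀQx` is `tr Q · ρ² / (M + 2) = (∑ λᵢ) ρ² / (M + 2)`. Finally the ellipsoid has volume
`|det L|⁻¹ = (∏ λᵢ)^(-1/2)` times that of the ball of radius `ρ'`, so equal volumes force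
`ρ² / ρ'² = (∏ λᵢ)^(-1/M)`.
-/

open Matrix MeasureTheory Finset

section setAverage

variable {α : Type*} [MeasurableSpace α] {μ : Measure α} {s : Set α}

theorem setAverage_finset_sum {κ : Type*} {t : Finset κ} {f : κ → α → ℝ}
    (hf : ∀ k ∈ t, IntegrableOn (f k) s μ) :
    ⨍ x in s, ∑ k ∈ t, f k x ∂μ = ∑ k ∈ t, ⨍ x in s, f k x ∂μ := by
  simp only [setAverage_eq, integral_finsetSum t hf, Finset.smul_sum]

theorem setAverage_const_mul (c : ℝ) (f : α → ℝ) :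
    ⨍ x in s, c * f x ∂μ = c * ⨍ x in s, f x ∂μ := by
  simp only [setAverage_eq, integral_const_mul, smul_eq_mul, mul_left_comm]

theorem setAverage_preimage_of_map_eq_smul {β : Type*} [MeasurableSpace β] {ν : Measure β}
    {f : α → β} (hf : AEMeasurable f μ) {c : ENNReal} (hc₀ : c ≠ 0) (hc : c ≠ ⊤)
    (hmap : μ.map f = c • ν) {t : Set β} (ht : MeasurableSet t) {g : β → ℝ}
    (hg : AEStronglyMeasurable g ν) :
    ⨍ x in f ⁻¹' t, g (f x) ∂μ = ⨍ y in t, g y ∂ν := by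
  have hvol : μ.real (f ⁻¹' t) = c.toReal * ν.real t := by
    rw [← map_measureReal_apply_of_aemeasurable hf ht, hmap, measureReal_ennreal_smul_apply]
  have hint : ∫ x in f ⁻¹' t, g (f x) ∂μ = c.toReal * ∫ y in t, g y ∂ν := by
    rw [← setIntegral_map ht (by rw [hmap]; exact hg.smul_measure c) hf, hmap,
      Measure.restrict_smul, integral_smul_measure, smul_eq_mul]
  have hc' : c.toReal ≠ 0 := ENNReal.toReal_ne_zero.mpr ⟨hc₀, hc⟩
  rw [setAverage_eq, setAverage_eq, hvol, hint, smul_eq_mul, smul_eq_mul, mul_inv,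
    mul_mul_mul_comm, inv_mul_cancel₀ hc', one_mul]

end setAverage

section closedBall

open Metric Set

variable {E : Type*} [NormedAddCommGroup E] [NormedSpace ℝ E] [Nontrivial E]
  [FiniteDimensional ℝ E] [MeasurableSpace E] [BorelSpace E] (μ : Measure E) [μ.IsAddHaarMeasure]

theorem integral_sq_norm_closedBall {r : ℝ} (hr : 0 ≤ r) :
    ∫ x in closedBall 0 r, ‖x‖ ^ 2 ∂μ =
      Module.finrank ℝ E / (Module.finrank ℝ E + 2) * r ^ (Module.finrank ℝ E + 2) *
        μ.real (ball 0 1) := by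
  set d := Module.finrank ℝ E
  have hd : 0 < d := Module.finrank_pos
  have hind : (closedBall (0 : E) r).indicator (fun x => ‖x‖ ^ 2)
      = fun x => (Iic r).indicator (fun t : ℝ => t ^ 2) ‖x‖ := by
    ext x
    by_cases hx : ‖x‖ ≤ r <;> simp [hx]
  have hradial : ∫ t in Ioi (0 : ℝ), t ^ (d - 1) • (Iic r).indicator (fun t : ℝ => t ^ 2) t
      = ∫ t in (0 : ℝ)..r, t ^ (d + 1) := by
    have hpow : ∀ t : ℝ, t ^ (d - 1) • (Iic r).indicator (fun t : ℝ => t ^ 2) t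
        = (Iic r).indicator (fun t : ℝ => t ^ (d + 1)) t := by
      intro t
      by_cases ht : t ≤ r
      · rw [indicator_of_mem (Set.mem_Iic.mpr ht), indicator_of_mem (Set.mem_Iic.mpr ht),
          smul_eq_mul, ← pow_add]
        congr 1; omega
      · simp [ht]
    simp_rw [hpow]
    rw [setIntegral_indicator measurableSet_Iic, Ioi_inter_Iic,
      intervalIntegral.integral_of_le hr]
  rw [← integral_indicator measurableSet_closedBall, hind, integral_fun_norm_addHaar, hradial,
    integral_pow, nsmul_eq_mul, smul_eq_mul]
  push_cast
  field_simp
  ring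

theorem setAverage_sq_norm_closedBall {r : ℝ} (hr : 0 < r) :
    ⨍ x in closedBall 0 r, ‖x‖ ^ 2 ∂μ =
      Module.finrank ℝ E / (Module.finrank ℝ E + 2) * r ^ 2 := by
  have hball : μ.real (ball 0 1) ≠ 0 :=
    (measureReal_ne_zero_iff measure_ball_lt_top.ne).mpr (measure_ball_pos μ 0 one_pos).ne'
  rw [setAverage_eq, integral_sq_norm_closedBall μ hr.le, measureReal_def,
    Measure.addHaar_closedBall μ 0 hr.le, ENNReal.toReal_mul, ENNReal.toReal_ofReal (by positivity),
    ← measureReal_def, smul_eq_mul]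
  field_simp
  ring

end closedBall

namespace Matrix

variable {ι : Type*} [Fintype ι] [DecidableEq ι]

theorem map_mulVec_volume {A : Matrix ι ι ℝ} (hA : A.det ≠ 0) :
    (volume : Measure (ι → ℝ)).map (A *ᵥ ·) = ENNReal.ofReal |A.det|⁻¹ • volume := by
  have := Measure.map_linearMap_addHaar_eq_smul_addHaar (volume : Measure (ι → ℝ))
    (f := toLin' A) (by rwa [LinearMap.det_toLin'])
  rwa [LinearMap.det_toLin', abs_inv, show ⇑(toLin' A) = (A *ᵥ ·) from
    funext (toLin'_apply A)] at this

theorem volume_preimage_mulVec {A : Matrix ι ι ℝ} (hA : A.det ≠ 0) {s : Set (ι → ℝ)}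
    (hs : MeasurableSet s) :
    volume ((A *ᵥ ·) ⁻¹' s) = ENNReal.ofReal |A.det|⁻¹ * volume s := by
  rw [← Measure.map_apply (by fun_prop) hs, map_mulVec_volume hA, Measure.smul_apply, smul_eq_mul]

theorem setAverage_preimage_mulVec {A : Matrix ι ι ℝ} (hA : A.det ≠ 0) {s : Set (ι → ℝ)}
    (hs : MeasurableSet s) {g : (ι → ℝ) → ℝ} (hg : AEStronglyMeasurable g volume) :
    ⨍ x in (A *ᵥ ·) ⁻¹' s, g (A *ᵥ x) = ⨍ y in s, g y :=
  setAverage_preimage_of_map_eq_smul (by fun_prop)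
    (ENNReal.ofReal_pos.mpr (by positivity)).ne' ENNReal.ofReal_ne_top (map_mulVec_volume hA) hs hg

omit [DecidableEq ι] in
theorem sum_sq_mulVec (L : Matrix ι ι ℝ) (x : ι → ℝ) :
    ∑ i, (L *ᵥ x) i ^ 2 = x ⬝ᵥ ((Lᵀ * L) *ᵥ x) := by
  rw [← mulVec_mulVec, dotProduct_mulVec, vecMul_transpose]
  simp only [dotProduct, sq]

theorem sum_sq_mulVec_of_mem_orthogonalGroup {A : Matrix ι ι ℝ}
    (hA : A ∈ orthogonalGroup ι ℝ) (x : ι → ℝ) : ∑ i, (A *ᵥ x) i ^ 2 = ∑ i, x i ^ 2 := by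
  rw [sum_sq_mulVec, (mem_orthogonalGroup_iff' ι ℝ).mp hA, one_mulVec]
  simp only [dotProduct, sq]

theorem det_ne_zero_of_mem_orthogonalGroup {A : Matrix ι ι ℝ} (hA : A ∈ orthogonalGroup ι ℝ) :
    A.det ≠ 0 := by
  have h : Aᵀ.det * A.det = 1 := by
    rw [← det_mul, (mem_orthogonalGroup_iff' ι ℝ).mp hA, det_one]
  exact right_ne_zero_of_mul_eq_one h

theorem _root_.Equiv.Perm.permMatrix_mem_orthogonalGroup (σ : Equiv.Perm ι) :
    σ.permMatrix ℝ ∈ orthogonalGroup ι ℝ := by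
  rw [mem_orthogonalGroup_iff ι ℝ, transpose_permMatrix, ← permMatrix_mul, inv_mul_cancel,
    permMatrix_one]

theorem diagonal_mem_orthogonalGroup {d : ι → ℝ} (hd : ∀ i, d i ^ 2 = 1) :
    diagonal d ∈ orthogonalGroup ι ℝ := by
  rw [mem_orthogonalGroup_iff ι ℝ, diagonal_transpose, diagonal_mul_diagonal, ← diagonal_one]
  exact congrArg diagonal (funext fun i => by rw [← sq, hd])

theorem trace_mul_mul_transpose_of_mem_orthogonalGroup {U : Matrix ι ι ℝ}
    (hU : U ∈ orthogonalGroup ι ℝ) (D : Matrix ι ι ℝ) : (U * D * Uᵀ).trace = D.trace := by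
  rw [trace_mul_comm, ← Matrix.mul_assoc, (mem_orthogonalGroup_iff' ι ℝ).mp hU, Matrix.one_mul]

theorem mul_diagonal_mul_transpose_eq_transpose_mul_self (U : Matrix ι ι ℝ) {lam : ι → ℝ}
    (hlam : ∀ i, 0 ≤ lam i) :
    U * diagonal lam * Uᵀ =
      (diagonal (fun i => √(lam i)) * Uᵀ)ᵀ * (diagonal (fun i => √(lam i)) * Uᵀ) := by
  have hsqrt : diagonal lam = diagonal (fun i => √(lam i)) * diagonal (fun i => √(lam i)) := by
    rw [diagonal_mul_diagonal]
    exact congrArg diagonal (funext fun i => (Real.mul_self_sqrt (hlam i)).symm)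
  rw [hsqrt, transpose_mul, transpose_transpose, diagonal_transpose]
  simp only [Matrix.mul_assoc]

theorem det_diagonal_sqrt_mul_transpose_sq {U : Matrix ι ι ℝ} (hU : U ∈ orthogonalGroup ι ℝ)
    {lam : ι → ℝ} (hlam : ∀ i, 0 ≤ lam i) :
    (diagonal (fun i => √(lam i)) * Uᵀ).det ^ 2 = ∏ i, lam i := by
  have hUdet : U.det ^ 2 = 1 := by
    rw [← det_one (n := ι) (R := ℝ), ← (mem_orthogonalGroup_iff ι ℝ).mp hU, det_mul,
      det_transpose, sq]
  rw [det_mul, det_diagonal, det_transpose, mul_pow, hUdet, mul_one, ← Finset.prod_pow]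
  exact Finset.prod_congr rfl fun i _ => Real.sq_sqrt (hlam i)

end Matrix

-- Not `Metric.closedBall`: the norm on `ι → ℝ` is the sup norm.
def euclidBall (ι : Type*) [Fintype ι] (r : ℝ) : Set (ι → ℝ) := {x | ∑ i, x i ^ 2 ≤ r ^ 2}

section euclidBall

variable {ι : Type*} [Fintype ι]

theorem sum_sq_eq_norm_toLp_sq (x : ι → ℝ) : ∑ i, x i ^ 2 = ‖WithLp.toLp 2 x‖ ^ 2 := by
  simp [EuclideanSpace.real_norm_sq_eq]

theorem euclidBall_eq_preimage_closedBall {r : ℝ} (hr : 0 ≤ r) :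
    euclidBall ι r = WithLp.toLp 2 ⁻¹' Metric.closedBall (0 : EuclideanSpace ℝ ι) r := by
  ext x
  rw [Set.mem_preimage, mem_closedBall_zero_iff, ← sq_le_sq₀ (norm_nonneg _) hr,
    ← sum_sq_eq_norm_toLp_sq]
  rfl

theorem measurableSet_euclidBall (r : ℝ) : MeasurableSet (euclidBall ι r) :=
  measurableSet_le (by fun_prop) measurable_const

theorem isCompact_euclidBall {r : ℝ} (hr : 0 ≤ r) : IsCompact (euclidBall ι r) := by
  rw [euclidBall_eq_preimage_closedBall hr]
  exact (PiLp.homeomorph 2 fun _ : ι => ℝ).symm.isCompact_preimage.mpr (isCompact_closedBall 0 r)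

theorem volume_euclidBall {r : ℝ} (hr : 0 ≤ r) :
    volume (euclidBall ι r) =
      ENNReal.ofReal (r ^ Fintype.card ι) * volume (Metric.ball (0 : EuclideanSpace ℝ ι) 1) := by
  rw [euclidBall_eq_preimage_closedBall hr,
    (PiLp.volume_preserving_toLp ι).measure_preimage measurableSet_closedBall.nullMeasurableSet,
    Measure.addHaar_closedBall _ _ hr, finrank_euclideanSpace]

theorem pow_card_eq_of_volume_euclidBall_eq {c ρ ρ' : ℝ} (hc : 0 ≤ c) (hρ : 0 ≤ ρ) (hρ' : 0 ≤ ρ')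
    (h : volume (euclidBall ι ρ) = ENNReal.ofReal c * volume (euclidBall ι ρ')) :
    ρ ^ Fintype.card ι = c * ρ' ^ Fintype.card ι := by
  rw [volume_euclidBall hρ, volume_euclidBall hρ', ← mul_assoc, ← ENNReal.ofReal_mul hc,
    ENNReal.mul_left_inj (Metric.measure_ball_pos _ _ one_pos).ne' measure_ball_lt_top.ne,
    ENNReal.ofReal_eq_ofReal_iff (by positivity) (by positivity)] at h
  exact h

theorem setAverage_sum_sq_euclidBall [Nonempty ι] {r : ℝ} (hr : 0 < r) :
    ⨍ x in euclidBall ι r, ∑ i, x i ^ 2 = Fintype.card ι / (Fintype.card ι + 2) * r ^ 2 := by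
  have hmap : (volume : Measure (ι → ℝ)).map (WithLp.toLp 2) = (1 : ENNReal) • volume := by
    rw [(PiLp.volume_preserving_toLp ι).map_eq, one_smul]
  simp_rw [sum_sq_eq_norm_toLp_sq]
  rw [euclidBall_eq_preimage_closedBall hr.le,
    setAverage_preimage_of_map_eq_smul (PiLp.volume_preserving_toLp ι).measurable.aemeasurable
      one_ne_zero ENNReal.one_ne_top hmap measurableSet_closedBall (g := fun y => ‖y‖ ^ 2)
      (by fun_prop),
    setAverage_sq_norm_closedBall volume hr, finrank_euclideanSpace]

theorem integrableOn_euclidBall {r : ℝ} (hr : 0 ≤ r) {f : (ι → ℝ) → ℝ} (hf : Continuous f) :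
    IntegrableOn f (euclidBall ι r) :=
  hf.continuousOn.integrableOn_compact (isCompact_euclidBall hr)

variable [DecidableEq ι]

theorem preimage_mulVec_euclidBall {A : Matrix ι ι ℝ} (hA : A ∈ orthogonalGroup ι ℝ) (r : ℝ) :
    (A *ᵥ ·) ⁻¹' euclidBall ι r = euclidBall ι r := by
  ext x
  simp only [Set.mem_preimage, euclidBall, Set.mem_ofPred_eq,
    sum_sq_mulVec_of_mem_orthogonalGroup hA]

theorem setAverage_comp_mulVec_euclidBall {A : Matrix ι ι ℝ} (hA : A ∈ orthogonalGroup ι ℝ)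
    (r : ℝ) {g : (ι → ℝ) → ℝ} (hg : AEStronglyMeasurable g volume) :
    ⨍ x in euclidBall ι r, g (A *ᵥ x) = ⨍ x in euclidBall ι r, g x := by
  conv_lhs => rw [← preimage_mulVec_euclidBall hA r]
  exact setAverage_preimage_mulVec (det_ne_zero_of_mem_orthogonalGroup hA)
    (measurableSet_euclidBall r) hg

theorem setAverage_sq_euclidBall {r : ℝ} (hr : 0 < r) (i : ι) :
    ⨍ x in euclidBall ι r, x i ^ 2 = r ^ 2 / (Fintype.card ι + 2) := by
  have : Nonempty ι := ⟨i⟩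
  have hswap : ∀ j, ⨍ x in euclidBall ι r, x j ^ 2 = ⨍ x in euclidBall ι r, x i ^ 2 := by
    intro j
    rw [← setAverage_comp_mulVec_euclidBall (Equiv.swap i j).permMatrix_mem_orthogonalGroup r
      (g := fun x => x i ^ 2) (by fun_prop : Continuous _).aestronglyMeasurable]
    simp [permMatrix_mulVec]
  have hsum := setAverage_sum_sq_euclidBall (ι := ι) hr
  rw [setAverage_finset_sum fun j _ => integrableOn_euclidBall hr.le (by fun_prop),
    Finset.sum_congr rfl fun j _ => hswap j, Finset.sum_const, Finset.card_univ,
    nsmul_eq_mul] at hsum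
  have hcard : (Fintype.card ι : ℝ) ≠ 0 := Nat.cast_ne_zero.mpr Fintype.card_ne_zero
  field_simp at hsum ⊢
  linarith

theorem setAverage_mul_euclidBall (r : ℝ) {i j : ι} (hij : i ≠ j) :
    ⨍ x in euclidBall ι r, x i * x j = 0 := by
  set d : ι → ℝ := Function.update 1 i (-1)
  have hd : ∀ k, d k ^ 2 = 1 := by
    intro k
    by_cases hk : k = i <;> simp [d, hk]
  have hflip := setAverage_comp_mulVec_euclidBall (diagonal_mem_orthogonalGroup hd) r
    (g := fun x => x i * x j) (by fun_prop : Continuous _).aestronglyMeasurable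
  simp only [mulVec_diagonal, d, Function.update_self, Function.update_of_ne hij.symm,
    Pi.one_apply, one_mul, neg_mul] at hflip
  rw [average_neg] at hflip
  linarith

theorem setAverage_dotProduct_mulVec_euclidBall (Q : Matrix ι ι ℝ) {r : ℝ} (hr : 0 < r) :
    ⨍ x in euclidBall ι r, x ⬝ᵥ (Q *ᵥ x) = Q.trace * r ^ 2 / (Fintype.card ι + 2) := by
  have hexpand : ∀ x : ι → ℝ, x ⬝ᵥ (Q *ᵥ x) = ∑ i, ∑ j, Q i j * (x i * x j) := by
    intro x
    simp only [dotProduct, mulVec, Finset.mul_sum]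
    exact Finset.sum_congr rfl fun i _ => Finset.sum_congr rfl fun j _ => by ring
  have hint : ∀ i j, IntegrableOn (fun x : ι → ℝ => Q i j * (x i * x j)) (euclidBall ι r) :=
    fun i j => integrableOn_euclidBall hr.le (by fun_prop)
  have hdiag : ∀ i, ∑ j, ⨍ x in euclidBall ι r, Q i j * (x i * x j) =
      Q i i * (r ^ 2 / (Fintype.card ι + 2)) := by
    intro i
    rw [Finset.sum_eq_single i (fun j _ hji => by
        rw [setAverage_const_mul, setAverage_mul_euclidBall r (Ne.symm hji), mul_zero])
        (by simp), setAverage_const_mul]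
    simp only [← sq, setAverage_sq_euclidBall hr i]
  simp_rw [hexpand]
  rw [setAverage_finset_sum fun i _ => integrableOn_euclidBall hr.le (by fun_prop)]
  simp_rw [setAverage_finset_sum fun j _ => hint _ j, hdiag, ← Finset.sum_mul, mul_div_assoc]
  rfl

end euclidBall

section ellipsoid

variable {ι : Type*} [Fintype ι] [DecidableEq ι]

omit [DecidableEq ι] in
theorem ellipsoid_eq_preimage_euclidBall (L : Matrix ι ι ℝ) (r : ℝ) :
    {x | x ⬝ᵥ ((Lᵀ * L) *ᵥ x) ≤ r ^ 2} = (L *ᵥ ·) ⁻¹' euclidBall ι r := by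
  ext x
  simp only [Set.mem_preimage, euclidBall, Set.mem_ofPred_eq, sum_sq_mulVec]

theorem volume_ellipsoid {L : Matrix ι ι ℝ} (hL : L.det ≠ 0) (r : ℝ) :
    volume {x | x ⬝ᵥ ((Lᵀ * L) *ᵥ x) ≤ r ^ 2} =
      ENNReal.ofReal |L.det|⁻¹ * volume (euclidBall ι r) := by
  rw [ellipsoid_eq_preimage_euclidBall, volume_preimage_mulVec hL (measurableSet_euclidBall r)]

theorem setAverage_ellipsoid [Nonempty ι] {L : Matrix ι ι ℝ} (hL : L.det ≠ 0) {r : ℝ}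
    (hr : 0 < r) :
    ⨍ x in {x | x ⬝ᵥ ((Lᵀ * L) *ᵥ x) ≤ r ^ 2}, x ⬝ᵥ ((Lᵀ * L) *ᵥ x) =
      Fintype.card ι / (Fintype.card ι + 2) * r ^ 2 := by
  rw [ellipsoid_eq_preimage_euclidBall]
  simp_rw [← sum_sq_mulVec L]
  rw [setAverage_preimage_mulVec hL (measurableSet_euclidBall r)
    (g := fun y => ∑ i, y i ^ 2) (by fun_prop : Continuous _).aestronglyMeasurable,
    setAverage_sum_sq_euclidBall hr]

end ellipsoid

/-- The ratio of the average energy `xᵀQx` over a sphere to that over the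
equal-volume ellipsoid `{x : xᵀQx ≤ ρ'²}` equals the channel gain
`G_H = (Σλᵢ/M)/(Πλᵢ)^(1/M)`. -/
theorem sphere_vs_oval_gain (M : ℕ) (hM : 0 < M)
    (U : Matrix (Fin M) (Fin M) ℝ) (lam : Fin M → ℝ)
    (hlam : ∀ i, 0 < lam i) (hU : U * Uᵀ = 1)
    (Q : Matrix (Fin M) (Fin M) ℝ) (hQ : Q = U * Matrix.diagonal lam * Uᵀ)
    (ρ ρ' : ℝ) (hρ : 0 < ρ) (hρ' : 0 < ρ')
    (hvol : volume {x : Fin M → ℝ | ∑ i, x i ^ 2 ≤ ρ ^ 2}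
      = volume {x : Fin M → ℝ | x ⬝ᵥ (Q *ᵥ x) ≤ ρ' ^ 2}) :
    (((volume {x : Fin M → ℝ | ∑ i, x i ^ 2 ≤ ρ ^ 2}).toReal)⁻¹ *
        (∫ x in {x : Fin M → ℝ | ∑ i, x i ^ 2 ≤ ρ ^ 2}, x ⬝ᵥ (Q *ᵥ x))) /
      (((volume {x : Fin M → ℝ | x ⬝ᵥ (Q *ᵥ x) ≤ ρ' ^ 2}).toReal)⁻¹ *
        (∫ x in {x : Fin M → ℝ | x ⬝ᵥ (Q *ᵥ x) ≤ ρ' ^ 2}, x ⬝ᵥ (Q *ᵥ x)))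
      = ((∑ i, lam i) / M) / ((∏ i, lam i) ^ ((1 : ℝ) / M)) := by
  have hU' : U ∈ orthogonalGroup (Fin M) ℝ := (mem_orthogonalGroup_iff _ _).mpr hU
  have : Nonempty (Fin M) := ⟨⟨0, hM⟩⟩
  set L := diagonal (fun i => √(lam i)) * Uᵀ
  have hQL : Q = Lᵀ * L :=
    hQ.trans (mul_diagonal_mul_transpose_eq_transpose_mul_self U fun i => (hlam i).le)
  have hdetL : L.det ^ 2 = ∏ i, lam i :=
    det_diagonal_sqrt_mul_transpose_sq hU' fun i => (hlam i).le
  have hP : 0 < ∏ i, lam i := Finset.prod_pos fun i _ => hlam i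
  have hL : L.det ≠ 0 := fun h => hP.ne' (by simp [← hdetL, h])
  have hB : {x : Fin M → ℝ | ∑ i, x i ^ 2 ≤ ρ ^ 2} = euclidBall (Fin M) ρ := rfl
  have hradius : ρ ^ M = |L.det|⁻¹ * ρ' ^ M := by
    have := pow_card_eq_of_volume_euclidBall_eq (c := |L.det|⁻¹) (by positivity) hρ.le hρ'.le
      (by rw [← hB, hvol, hQL, volume_ellipsoid hL])
    rwa [Fintype.card_fin] at this
  have hratio : ρ ^ 2 / ρ' ^ 2 = ((∏ i, lam i) ^ ((1 : ℝ) / M))⁻¹ := by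
    have hpow : (ρ ^ 2 / ρ' ^ 2) ^ M = (∏ i, lam i)⁻¹ := by
      rw [div_pow, ← pow_mul, ← pow_mul, mul_comm 2, pow_mul, pow_mul, hradius, ← hdetL, ← sq_abs L.det]
      field_simp
    rw [← Real.inv_rpow hP.le, ← hpow, one_div, Real.pow_rpow_inv_natCast (by positivity) hM.ne']
  simp only [← measureReal_def, ← smul_eq_mul, ← setAverage_eq]
  rw [hB, setAverage_dotProduct_mulVec_euclidBall Q hρ, hQL, setAverage_ellipsoid hL hρ', ← hQL,
    hQ, trace_mul_mul_transpose_of_mem_orthogonalGroup hU', trace_diagonal, Fintype.card_fin,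
    div_eq_mul_inv _ ((∏ i, lam i) ^ _), ← hratio]
  field_simp
end
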